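/- arXiv:2405.13904 — 2 statements merged into one kernel-verified Lean document; each statement's English description precedes it below -/
import Mathlib

section
/- Let y : ℝ → ℝ be continuous with |y(t)| ≤ c < b, and let (t_n) be IF-TEM firing times with parameters b, κ, δ. Then in any time interval of length T there are at least ⌊T·(b−c)/(κδ)⌋ firing instants; in particular if (b−c)/(κδ) ≥ (8K+2)/T then at least 8K+2 firings occur in an interval of length T. -/
/-!
On a firing interval `[t n, t (n + 1)]` the integrand `y + b` lies in `[b - c, b + c]`, so the
integral `κ δ` forces the gap `t (n + 1) - t n` into `[κ δ / (b + c), κ δ / (b - c)]`. With gaps at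
most `G`, the `N` firing times following the last one before `a` all lie in `[a, a + N G]`; the
positive lower bound on the gaps makes the set of firings in a bounded window finite, so that its
cardinality is meaningful.
-/

open intervalIntegral

lemma mul_le_integral_le_mul {f : ℝ → ℝ} {u v m M : ℝ} (huv : u ≤ v)
    (hf : IntervalIntegrable f MeasureTheory.volume u v) (hfm : ∀ s, m ≤ f s)
    (hfM : ∀ s, f s ≤ M) :
    (v - u) * m ≤ ∫ s in u..v, f s ∧ ∫ s in u..v, f s ≤ (v - u) * M := by
  have hm := integral_mono_on huv intervalIntegrable_const hf fun s _ => hfm s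
  have hM := integral_mono_on huv hf intervalIntegrable_const fun s _ => hfM s
  rw [integral_const, smul_eq_mul] at hm hM
  exact ⟨hm, hM⟩

namespace GapBounded

variable {t : ℤ → ℝ} {g G : ℝ}

lemma sub_le_mul_of_gap_le (hG : ∀ n, t (n + 1) - t n ≤ G) {m n : ℤ} (hmn : m ≤ n) :
    t n - t m ≤ (n - m) * G := by
  induction n, hmn using Int.leInduction with
  | base => simp
  | succ n _ ih => push_cast; linarith [hG n]

lemma mul_le_sub_of_le_gap (hg : ∀ n, g ≤ t (n + 1) - t n) {m n : ℤ} (hmn : m ≤ n) :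
    (n - m) * g ≤ t n - t m := by
  induction n, hmn using Int.leInduction with
  | base => simp
  | succ n _ ih => push_cast; linarith [hg n]

variable (hg₀ : 0 < g) (hg : ∀ n, g ≤ t (n + 1) - t n)
include hg₀ hg

lemma strictMono : StrictMono t :=
  strictMono_int_of_lt_succ fun n => by linarith [hg n]

lemma exists_lt_le_succ (a : ℝ) : ∃ m, t m < a ∧ a ≤ t (m + 1) := by
  obtain ⟨k, hk⟩ := exists_nat_gt ((t 0 - a) / g)
  obtain ⟨l, hl⟩ := exists_nat_gt ((a - t 0) / g)
  rw [div_lt_iff₀ hg₀] at hk hl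
  have hbelow : t (-k) < a := by
    have := mul_le_sub_of_le_gap hg (show -(k : ℤ) ≤ 0 by omega)
    push_cast at this
    linarith
  have hbdd : ∀ z, t z < a → z ≤ l := by
    have := mul_le_sub_of_le_gap hg (show (0 : ℤ) ≤ l by omega)
    push_cast at this
    exact fun z hz => ((strictMono hg₀ hg).lt_iff_lt.mp (by linarith)).le
  obtain ⟨m, hm, hmax⟩ := Int.exists_greatest_of_bdd ⟨l, hbdd⟩ ⟨-k, hbelow⟩
  exact ⟨m, hm, not_lt.mp fun h => by linarith [hmax (m + 1) h]⟩

lemma finite_setOf_mem_Icc (a b : ℝ) : {n | t n ∈ Set.Icc a b}.Finite := by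
  obtain ⟨m, hm, -⟩ := exists_lt_le_succ hg₀ hg a
  obtain ⟨M, hM⟩ := exists_nat_gt ((b - t m) / g)
  rw [div_lt_iff₀ hg₀] at hM
  refine (Set.finite_Icc m (m + M)).subset fun n ⟨han, hnb⟩ => ?_
  have hmn : m ≤ n := ((strictMono hg₀ hg).lt_iff_lt.mp (hm.trans_le han)).le
  refine ⟨hmn, ?_⟩
  by_contra! hlt
  have hgap := mul_le_sub_of_le_gap hg hmn
  have : m + (M : ℝ) ≤ n := by exact_mod_cast hlt.le
  nlinarith

lemma le_ncard_setOf_mem_Icc (hG : ∀ n, t (n + 1) - t n ≤ G) {N : ℤ} {a T : ℝ}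
    (hNT : N * G ≤ T) : N ≤ {n | t n ∈ Set.Icc a (a + T)}.ncard := by
  obtain ⟨m, hm, ham⟩ := exists_lt_le_succ hg₀ hg a
  have hG₀ : 0 < G := by linarith [hg 0, hG 0]
  have hsub : ↑(Finset.Icc (m + 1) (m + N)) ⊆ {n | t n ∈ Set.Icc a (a + T)} := by
    intro n hn
    rw [Finset.coe_Icc, Set.mem_Icc] at hn
    have hnN : ((n - m : ℤ) : ℝ) ≤ N := by exact_mod_cast (by omega : n - m ≤ N)
    push_cast at hnN
    refine ⟨ham.trans ((strictMono hg₀ hg).monotone hn.1), ?_⟩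
    nlinarith [sub_le_mul_of_gap_le hG (show m ≤ n by omega)]
  have hcard := Set.ncard_le_ncard hsub (finite_setOf_mem_Icc hg₀ hg _ _)
  rw [Set.ncard_coe_finset, Int.card_Icc] at hcard
  omega

end GapBounded

lemma firing_gap_mem_Icc {y : ℝ → ℝ} {c b κ δ u v : ℝ} (hc : ∀ s, |y s| ≤ c) (hb : c < b)
    (hκ : 0 < κ) (huv : u ≤ v) (hy : IntervalIntegrable y MeasureTheory.volume u v)
    (hfire : (1 / κ) * ∫ s in u..v, (y s + b) = δ) :
    v - u ∈ Set.Icc (κ * δ / (b + c)) (κ * δ / (b - c)) := by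
  have hc₀ : 0 ≤ c := (abs_nonneg _).trans (hc 0)
  have hint : ∫ s in u..v, (y s + b) = κ * δ := by
    field_simp at hfire
    linarith
  obtain ⟨hlow, hup⟩ := mul_le_integral_le_mul (f := fun s => y s + b) (m := b - c) (M := b + c) huv
    (hy.add intervalIntegrable_const)
    (fun s => by linarith [(abs_le.mp (hc s)).1]) (fun s => by linarith [(abs_le.mp (hc s)).2])
  rw [hint] at hlow hup
  constructor
  · rw [div_le_iff₀ (by linarith)]; linarith
  · rw [le_div_iff₀ (by linarith)]; linarith

theorem stmt_2_general (y : ℝ → ℝ) (c b κ δ T : ℝ) (K : ℕ)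
    (hy : Continuous y) (hc : ∀ t, |y t| ≤ c) (hb : c < b)
    (hκ : 0 < κ) (hδ : 0 < δ) (hT : 0 < T)
    (t : ℤ → ℝ) (hmono : StrictMono t)
    (hfire : ∀ n : ℤ, (1 / κ) * ∫ s in (t n)..(t (n + 1)), (y s + b) = δ) :
    (∀ a : ℝ, ⌊T * (b - c) / (κ * δ)⌋ ≤ ({n : ℤ | t n ∈ Set.Icc a (a + T)}.ncard : ℤ)) ∧
    ((b - c) / (κ * δ) ≥ (8 * K + 2) / T →
      ∀ a : ℝ, 8 * K + 2 ≤ {n : ℤ | t n ∈ Set.Icc a (a + T)}.ncard) := by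
  have hc₀ : 0 ≤ c := (abs_nonneg _).trans (hc 0)
  have hbc : 0 < b - c := by linarith
  have hκδ : 0 < κ * δ := mul_pos hκ hδ
  have hgap n := firing_gap_mem_Icc hc hb hκ (hmono (Int.lt_succ n)).le
    (hy.intervalIntegrable _ _) (hfire n)
  have hcount (a : ℝ) : ⌊T * (b - c) / (κ * δ)⌋ ≤ ({n | t n ∈ Set.Icc a (a + T)}.ncard : ℤ) := by
    refine GapBounded.le_ncard_setOf_mem_Icc (div_pos hκδ (by linarith))
      (fun n => (hgap n).1) (fun n => (hgap n).2) ?_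
    calc (⌊T * (b - c) / (κ * δ)⌋ : ℝ) * (κ * δ / (b - c))
        ≤ T * (b - c) / (κ * δ) * (κ * δ / (b - c)) := by gcongr; exact Int.floor_le _
      _ = T := by field_simp
  refine ⟨hcount, fun hrate a => ?_⟩
  have hfloor : 8 * (K : ℤ) + 2 ≤ ⌊T * (b - c) / (κ * δ)⌋ := by
    rw [Int.le_floor, mul_div_assoc]
    push_cast
    rwa [ge_iff_le, div_le_iff₀' hT] at hrate
  exact_mod_cast hfloor.trans (hcount a)

theorem stmt_2 (y : ℝ → ℝ) (c b κ δ T : ℝ) (K : ℕ) (hK : 0 < K)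
    (hy : Continuous y) (hc : ∀ t, |y t| ≤ c) (hb : c < b)
    (hκ : 0 < κ) (hδ : 0 < δ) (hT : 0 < T)
    (t : ℤ → ℝ) (hmono : StrictMono t)
    (hfire : ∀ n : ℤ, (1 / κ) * ∫ s in (t n)..(t (n + 1)), (y s + b) = δ) :
    (∀ a : ℝ, ⌊T * (b - c) / (κ * δ)⌋ ≤ ({n : ℤ | t n ∈ Set.Icc a (a + T)}.ncard : ℤ)) ∧
    ((b - c) / (κ * δ) ≥ (8 * K + 2) / T →
      ∀ a : ℝ, 8 * K + 2 ≤ {n : ℤ | t n ∈ Set.Icc a (a + T)}.ncard) :=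
  stmt_2_general y c b κ δ T K hy hc hb hκ hδ hT t hmono hfire
end

section
/- Suppose X[m] = Σ_{k=1}^K v_k u_k^m for m = 1, …, 2K, where the u_k ∈ ℂ \ {0} are pairwise distinct and v_k ≠ 0 for all k. Then the pairs {(u_k, v_k)}_{k=1}^K are uniquely determined by the values X[1], …, X[2K]: if also X[m] = Σ_{k=1}^{K} v'_k (u'_k)^m for distinct nonzero u'_k and nonzero v'_k, then {(u_k, v_k)} = {(u'_k, v'_k)} as sets. -/
/-!
Subtracting the two representations gives weights on at most `2K` nonzero nodes whose power sums
`∑ w(y) y^m` vanish for `m = 1, …, 2K`; the Vandermonde matrix of distinct nodes is invertible,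
so the weights vanish. Hence both representations define the same atomic measure
`∑ₖ vₖ δ_{uₖ}`, and for distinct nodes and nonzero weights the pairs `(uₖ, vₖ)` form exactly the
graph of that measure on its support.
-/

open Finset Finsupp

theorem Finset.eq_zero_of_forall_sum_mul_pow_eq_zero {R : Type*} [CommRing R] [IsDomain R]
    {s : Finset R} {w : R → R} (h : ∀ j < #s, ∑ y ∈ s, w y * y ^ j = 0) :
    ∀ y ∈ s, w y = 0 := by
  have hw := Matrix.eq_zero_of_forall_pow_sum_mul_pow_eq_zero
    (f := fun i => (s.equivFin.symm i : R)) (v := fun i => w (s.equivFin.symm i))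
    (Subtype.val_injective.comp s.equivFin.symm.injective) fun j => by
      rw [← h j j.isLt, ← s.sum_coe_sort]
      exact s.equivFin.symm.sum_comp fun y : s => w y * (y : R) ^ (j : ℕ)
  intro y hy
  simpa using congrFun hw (s.equivFin ⟨y, hy⟩)

theorem Finsupp.eq_zero_of_forall_linearCombination_pow_eq_zero {R : Type*} [CommRing R]
    [IsDomain R] {w : R →₀ R} (hw0 : w 0 = 0)
    (h : ∀ m ∈ Icc 1 #w.support, linearCombination R (· ^ m) w = 0) : w = 0 := by
  have hmul : ∀ y ∈ w.support, w y * y = 0 :=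
    Finset.eq_zero_of_forall_sum_mul_pow_eq_zero fun j hj => by
      have := h (j + 1) (mem_Icc.2 ⟨j.succ_pos, hj⟩)
      simpa only [linearCombination_apply, Finsupp.sum, smul_eq_mul, pow_succ', mul_assoc]
        using this
  ext y
  by_contra hy
  rcases mul_eq_zero.1 (hmul y (mem_support_iff.2 hy)) with h | rfl
  · exact hy h
  · exact hy hw0

/-- `∑ₖ v k • δ (u k)`: the weights of coinciding nodes are added. -/
noncomputable def atomicMeasure {ι α M : Type*} [Finite ι] [AddCommMonoid M] (u : ι → α)
    (v : ι → M) : α →₀ M :=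
  mapDomain u (equivFunOnFinite.symm v)

section atomicMeasure

variable {ι α M : Type*} [Fintype ι] [AddCommMonoid M]

theorem linearCombination_pow_atomicMeasure {R : Type*} [CommSemiring R] (u v : ι → R) (m : ℕ) :
    linearCombination R (· ^ m) (atomicMeasure u v) = ∑ k, v k * u k ^ m := by
  rw [atomicMeasure, linearCombination_mapDomain, linearCombination_apply]
  exact sum_fintype _ _ fun _ => zero_smul R _

theorem card_support_atomicMeasure_le (u : ι → α) (v : ι → M) :
    #(atomicMeasure u v).support ≤ Fintype.card ι := by
  classical
  exact (card_le_card mapDomain_support).trans (card_image_le.trans (card_le_univ _))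

variable {u : ι → α} {v : ι → M}

theorem atomicMeasure_apply_of_injective (hu : Function.Injective u) (k : ι) :
    atomicMeasure u v (u k) = v k :=
  mapDomain_apply hu _ k

theorem atomicMeasure_apply_of_notMem_range {y : α} (hy : y ∉ Set.range u) :
    atomicMeasure u v y = 0 :=
  mapDomain_of_notMem_range _ _ hy

theorem atomicMeasure_apply_zero [Zero α] (hu0 : ∀ k, u k ≠ 0) : atomicMeasure u v 0 = 0 :=
  atomicMeasure_apply_of_notMem_range fun ⟨k, hk⟩ => hu0 k hk

theorem range_eq_graph_atomicMeasure (hu : Function.Injective u) (hv0 : ∀ k, v k ≠ 0) :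
    Set.range (fun k => (u k, v k)) = {p | p.2 ≠ 0 ∧ atomicMeasure u v p.1 = p.2} := by
  ext ⟨y, c⟩
  simp only [Set.mem_range, Set.mem_ofPred_eq, Prod.mk.injEq]
  constructor
  · rintro ⟨k, rfl, rfl⟩
    exact ⟨hv0 k, atomicMeasure_apply_of_injective hu k⟩
  · rintro ⟨hc, hy⟩
    obtain ⟨k, rfl⟩ : y ∈ Set.range u := by
      by_contra h
      exact hc (hy ▸ atomicMeasure_apply_of_notMem_range h)
    exact ⟨k, rfl, (atomicMeasure_apply_of_injective hu k).symm.trans hy⟩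

end atomicMeasure

theorem stmt_16 (K : ℕ) (u v u' v' : Fin K → ℂ)
    (hu : Function.Injective u) (hu0 : ∀ k, u k ≠ 0) (hv0 : ∀ k, v k ≠ 0)
    (hu' : Function.Injective u') (hu'0 : ∀ k, u' k ≠ 0) (hv'0 : ∀ k, v' k ≠ 0)
    (X : ℕ → ℂ)
    (hX : ∀ m ∈ Finset.Icc 1 (2 * K), X m = ∑ k, v k * (u k) ^ m)
    (hX' : ∀ m ∈ Finset.Icc 1 (2 * K), X m = ∑ k, v' k * (u' k) ^ m) :
    Set.range (fun k => (u k, v k)) = Set.range (fun k => (u' k, v' k)) := by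
  have hcard : #(atomicMeasure u v - atomicMeasure u' v').support ≤ 2 * K := calc
    _ ≤ #((atomicMeasure u v).support ∪ (atomicMeasure u' v').support) := card_le_card support_sub
    _ ≤ K + K := (card_union_le _ _).trans <| by
      simpa using
        add_le_add (card_support_atomicMeasure_le u v) (card_support_atomicMeasure_le u' v')
    _ = 2 * K := by ring
  have hμ : atomicMeasure u v = atomicMeasure u' v' := by
    rw [← sub_eq_zero]
    refine eq_zero_of_forall_linearCombination_pow_eq_zero ?_ fun m hm => ?_
    · simp [atomicMeasure_apply_zero hu0, atomicMeasure_apply_zero hu'0]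
    · have hm' : m ∈ Icc 1 (2 * K) := Icc_subset_Icc_right hcard hm
      rw [map_sub, linearCombination_pow_atomicMeasure, linearCombination_pow_atomicMeasure,
        ← hX m hm', ← hX' m hm', sub_self]
  rw [range_eq_graph_atomicMeasure hu hv0, range_eq_graph_atomicMeasure hu' hv'0, hμ]
end
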